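/- arXiv:2505.23431 — 5 statements merged into one kernel-verified Lean document; each statement's English description precedes it below -/
import Mathlib

section
/- For any three polygonal curves σ, τ, υ in Euclidean space ℝ^d and any k ∈ ℕ, the k-DTW distance satisfies the relaxed triangle inequality d_kDTW(σ,τ) ≤ k · (d_kDTW(σ,υ) + d_kDTW(υ,τ)). -/
open List

/-- A (monotone) traversal of two curves with `m'` and `m''` vertices:
a sequence of (0-based) index pairs starting at `(0,0)`, ending at `(m'-1, m''-1)`,
where each pair is followed by one that increments at least one index by one. -/
def IsTraversal (m' m'' : ℕ) (T : List (ℕ × ℕ)) : Prop :=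
  T ≠ [] ∧ T.head? = some (0, 0) ∧ T.getLast? = some (m' - 1, m'' - 1) ∧
  (∀ p ∈ T, p.1 < m' ∧ p.2 < m'') ∧
  T.Chain' (fun a b => b = (a.1 + 1, a.2) ∨ b = (a.1, a.2 + 1) ∨ b = (a.1 + 1, a.2 + 1))

/-- Sum of the `k` largest entries of a list of reals (zero-padded if the list is shorter). -/
noncomputable def topkSum (k : ℕ) (l : List ℝ) : ℝ :=
  ((l.insertionSort (· ≥ ·)).take k).sum

/-- The list of matched distances of a traversal. -/
def matchedDists {E : Type*} [PseudoMetricSpace E] (σ τ : ℕ → E) (T : List (ℕ × ℕ)) :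
    List ℝ :=
  T.map fun p => dist (σ p.1) (τ p.2)

/-- The `k`-DTW distance of curves `σ` (complexity `m'`) and `τ` (complexity `m''`). -/
noncomputable def kDTW {E : Type*} [PseudoMetricSpace E] (k : ℕ) (σ τ : ℕ → E)
    (m' m'' : ℕ) : ℝ :=
  sInf {x | ∃ T, IsTraversal m' m'' T ∧ x = topkSum k (matchedDists σ τ T)}

/-- The DTW distance. -/
noncomputable def DTW {E : Type*} [PseudoMetricSpace E] (σ τ : ℕ → E) (m' m'' : ℕ) : ℝ :=
  sInf {x | ∃ T, IsTraversal m' m'' T ∧ x = (matchedDists σ τ T).sum}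

/-- The discrete Fréchet distance. -/
noncomputable def discreteFrechet {E : Type*} [PseudoMetricSpace E] (σ τ : ℕ → E)
    (m' m'' : ℕ) : ℝ :=
  sInf {x | ∃ T, IsTraversal m' m'' T ∧ x = (matchedDists σ τ T).foldr max 0}

/-!
Let `T₁` be a traversal of `(σ, υ)` and `T₂` one of `(υ, τ)`. Walking along both at once yields a
traversal `T` of `(σ, τ)` each of whose pairs `(i, j)` factors as `(i, l) ∈ T₁`, `(l, j) ∈ T₂`.
By the triangle inequality every matched distance of `T` is at most `‖σᵢ - υₗ‖ + ‖υₗ - τⱼ‖`,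
hence (for `k ≥ 1`) at most the top-`k` cost of `T₁` plus that of `T₂`. Summing `k` such distances
bounds the top-`k` cost of `T` by `k` times that sum; now take infima over `T₁` and `T₂`.
-/

open Relation SetRel

def TraversalStep (a b : ℕ × ℕ) : Prop :=
  b = (a.1 + 1, a.2) ∨ b = (a.1, a.2 + 1) ∨ b = (a.1 + 1, a.2 + 1)

theorem isTraversal_iff {m m' : ℕ} {T : List (ℕ × ℕ)} :
    IsTraversal m m' T ↔ T ≠ [] ∧ T.head? = some (0, 0) ∧ T.getLast? = some (m - 1, m' - 1) ∧
      (∀ p ∈ T, p.1 < m ∧ p.2 < m') ∧ T.IsChain TraversalStep :=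
  Iff.rfl

theorem traversalStep_iff {a b : ℕ × ℕ} :
    TraversalStep a b ↔
      a.1 ≤ b.1 ∧ b.1 ≤ a.1 + 1 ∧ a.2 ≤ b.2 ∧ b.2 ≤ a.2 + 1 ∧ a.1 + a.2 < b.1 + b.2 := by
  obtain ⟨i, j⟩ := a
  obtain ⟨i', j'⟩ := b
  simp only [TraversalStep, Prod.mk.injEq]
  omega

theorem TraversalStep.le {a b : ℕ × ℕ} (h : TraversalStep a b) : a ≤ b := by
  rw [traversalStep_iff] at h
  exact ⟨h.1, h.2.2.1⟩

theorem exists_isTraversal {m m' : ℕ} (hm : 1 ≤ m) (hm' : 1 ≤ m') : ∃ T, IsTraversal m m' T := by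
  -- down the first column, then along the last row (`t - (m - 1)` truncates to `0` on the column)
  refine ⟨(range (m + m' - 1)).map fun t => (min t (m - 1), t - (m - 1)), ?_⟩
  rw [isTraversal_iff, isChain_map, isChain_range]
  refine ⟨?_, ?_, ?_, ?_, fun t ht => ?_⟩
  · simp only [ne_eq, map_eq_nil_iff, range_eq_nil]; omega
  · rw [head?_map, head?_range, if_neg (by omega)]; simp
  · rw [getLast?_map, getLast?_range, if_neg (by omega)]
    simp only [Option.map_some, Option.some_inj, Prod.mk.injEq]; omega
  · simp only [forall_mem_map, mem_range]; omega
  · rw [traversalStep_iff]; dsimp only; omega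

theorem le_of_mem_of_getLast?_eq_some {T : List (ℕ × ℕ)} {a z : ℕ × ℕ}
    (hT : T.IsChain TraversalStep) (hz : T.getLast? = some z) (ha : a ∈ T) : a ≤ z := by
  obtain ⟨T, rfl⟩ := getLast?_eq_some_iff.1 hz
  have hsorted := pairwise_append.1 (hT.imp fun _ _ => TraversalStep.le).pairwise
  rcases mem_append.1 ha with ha | ha
  · exact hsorted.2.2 a ha z mem_cons_self
  · rw [mem_singleton.1 ha]

theorem fst_eq_of_cons_cons_suffix {T s : List (ℕ × ℕ)} {b b' z : ℕ × ℕ}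
    (hT : T.IsChain TraversalStep) (hz : T.getLast? = some z) (h : b :: b' :: s <:+ T)
    (hb : b.1 = z.1) : b'.1 = b.1 := by
  have hstep := (isChain_cons_cons.1 (hT.suffix h)).1
  have hle := le_of_mem_of_getLast?_eq_some hT hz (h.subset (mem_cons_of_mem b mem_cons_self))
  simp only [traversalStep_iff, Prod.le_def] at hstep hle
  omega

theorem snd_eq_of_cons_cons_suffix {T s : List (ℕ × ℕ)} {a a' z : ℕ × ℕ}
    (hT : T.IsChain TraversalStep) (hz : T.getLast? = some z) (h : a :: a' :: s <:+ T)
    (ha : a.2 = z.2) : a'.2 = a.2 := by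
  have hstep := (isChain_cons_cons.1 (hT.suffix h)).1
  have hle := le_of_mem_of_getLast?_eq_some hT hz (h.subset (mem_cons_of_mem a mem_cons_self))
  simp only [traversalStep_iff, Prod.le_def] at hstep hle
  omega

theorem mem_of_mem_take_insertionSort {k : ℕ} {l : List ℝ} {x : ℝ}
    (hx : x ∈ (l.insertionSort (· ≥ ·)).take k) : x ∈ l :=
  (mem_insertionSort _).1 (mem_of_mem_take hx)

theorem topkSum_nonneg {k : ℕ} {l : List ℝ} (h : ∀ x ∈ l, 0 ≤ x) : 0 ≤ topkSum k l :=
  sum_nonneg fun _ hx => h _ (mem_of_mem_take_insertionSort hx)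

theorem topkSum_le_mul {k : ℕ} {l : List ℝ} {M : ℝ} (hM : 0 ≤ M) (h : ∀ x ∈ l, x ≤ M) :
    topkSum k l ≤ k * M :=
  calc topkSum k l ≤ ((l.insertionSort (· ≥ ·)).take k).length • M :=
        sum_le_card_nsmul _ _ fun _ hx => h _ (mem_of_mem_take_insertionSort hx)
    _ ≤ k * M := by
        rw [nsmul_eq_mul]
        gcongr
        exact_mod_cast length_take_le k _

theorem le_topkSum {k : ℕ} {l : List ℝ} {x : ℝ} (hk : k ≠ 0) (h : ∀ y ∈ l, 0 ≤ y) (hx : x ∈ l) :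
    x ≤ topkSum k l := by
  have hx' : x ∈ l.insertionSort (· ≥ ·) := (mem_insertionSort _).2 hx
  obtain ⟨a, t, hs⟩ := exists_cons_of_ne_nil (ne_nil_of_mem hx')
  have hsorted := pairwise_insertionSort (· ≥ ·) l
  rw [hs] at hx' hsorted
  have hxa : x ≤ a := by
    rcases mem_cons.1 hx' with rfl | hxt
    exacts [le_rfl, rel_of_pairwise_cons hsorted hxt]
  obtain ⟨k, rfl⟩ := Nat.exists_eq_succ_of_ne_zero hk
  have ht : 0 ≤ (t.take k).sum := sum_nonneg fun y hy =>
    h y ((mem_insertionSort _).1 (hs ▸ mem_cons_of_mem a (mem_of_mem_take hy)))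
  rw [topkSum, hs, take_succ_cons, sum_cons]
  linarith

def compRel (T₁ T₂ : List (ℕ × ℕ)) : SetRel ℕ ℕ := {p | p ∈ T₁} ○ {p | p ∈ T₂}

theorem mk_mem_compRel {T₁ T₂ : List (ℕ × ℕ)} {a b : ℕ × ℕ} (ha : a ∈ T₁) (hb : b ∈ T₂)
    (hab : a.2 = b.1) : (a.1, b.2) ∈ compRel T₁ T₂ :=
  mem_comp.2 ⟨a.2, ha, by rwa [hab]⟩

/-- Walk along both traversals at once: advance `T₁` alone while its second coordinate stays
put, `T₂` alone while its first coordinate stays put, and both otherwise. The pair `(a.1, b.2)`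
then moves by a traversal step or not at all. -/
theorem reflTransGen_compRel {T₁ T₂ : List (ℕ × ℕ)} {z₁ z₂ : ℕ × ℕ}
    (hT₁ : T₁.IsChain TraversalStep) (hT₂ : T₂.IsChain TraversalStep)
    (hz₁ : T₁.getLast? = some z₁) (hz₂ : T₂.getLast? = some z₂) (hz : z₁.2 = z₂.1)
    {a b : ℕ × ℕ} {s₁ s₂ : List (ℕ × ℕ)} (h₁ : a :: s₁ <:+ T₁) (h₂ : b :: s₂ <:+ T₂)
    (hab : a.2 = b.1) :
    ReflTransGen (fun p q => TraversalStep p q ∧ q ∈ compRel T₁ T₂) (a.1, b.2) (z₁.1, z₂.2) := by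
  induction hn : s₁.length + s₂.length using Nat.strong_induction_on
    generalizing a b s₁ s₂ with | _ _ ih =>
  subst hn
  have advance {a' b' : ℕ × ℕ} {s₁' s₂' : List (ℕ × ℕ)} (h₁' : a' :: s₁' <:+ T₁)
      (h₂' : b' :: s₂' <:+ T₂) (hab' : a'.2 = b'.1)
      (hlen : s₁'.length + s₂'.length < s₁.length + s₂.length)
      (hstep : TraversalStep (a.1, b.2) (a'.1, b'.2)) :
      ReflTransGen (fun p q => TraversalStep p q ∧ q ∈ compRel T₁ T₂) (a.1, b.2) (z₁.1, z₂.2) :=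
    .head ⟨hstep, mk_mem_compRel (h₁'.subset mem_cons_self) (h₂'.subset mem_cons_self) hab'⟩
      (ih _ hlen h₁' h₂' hab' rfl)
  by_cases hadv₁ : ∃ a' s₁', s₁ = a' :: s₁' ∧ a'.2 = a.2
  · obtain ⟨a', s₁, rfl, ha⟩ := hadv₁
    have hstep := (isChain_cons_cons.1 (hT₁.suffix h₁)).1
    simp only [traversalStep_iff] at hstep
    exact advance ((suffix_cons a _).trans h₁) h₂ (ha.trans hab) (by simp)
      (by simp only [traversalStep_iff]; omega)
  by_cases hadv₂ : ∃ b' s₂', s₂ = b' :: s₂' ∧ b'.1 = b.1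
  · obtain ⟨b', s₂, rfl, hb⟩ := hadv₂
    have hstep := (isChain_cons_cons.1 (hT₂.suffix h₂)).1
    simp only [traversalStep_iff] at hstep
    exact advance h₁ ((suffix_cons b _).trans h₂) (hab.trans hb.symm) (by simp)
      (by simp only [traversalStep_iff]; omega)
  push Not at hadv₁ hadv₂
  rcases s₁ with _ | ⟨a', s₁⟩ <;> rcases s₂ with _ | ⟨b', s₂⟩
  · rw [singleton_suffix_iff_getLast?_eq_some, hz₁, Option.some_inj] at h₁
    rw [singleton_suffix_iff_getLast?_eq_some, hz₂, Option.some_inj] at h₂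
    rw [h₁, h₂]
  · rw [singleton_suffix_iff_getLast?_eq_some, hz₁, Option.some_inj] at h₁
    exact absurd (fst_eq_of_cons_cons_suffix hT₂ hz₂ h₂ (by rw [← hab, ← h₁, hz]))
      (hadv₂ b' s₂ rfl)
  · rw [singleton_suffix_iff_getLast?_eq_some, hz₂, Option.some_inj] at h₂
    exact absurd (snd_eq_of_cons_cons_suffix hT₁ hz₁ h₁ (by rw [hab, ← h₂, hz]))
      (hadv₁ a' s₁ rfl)
  · have hstep₁ := (isChain_cons_cons.1 (hT₁.suffix h₁)).1
    have hstep₂ := (isChain_cons_cons.1 (hT₂.suffix h₂)).1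
    have := hadv₁ a' s₁ rfl
    have := hadv₂ b' s₂ rfl
    simp only [traversalStep_iff] at hstep₁ hstep₂
    have h₁' := (suffix_cons a _).trans h₁
    have h₂' := (suffix_cons b _).trans h₂
    have hab' : a'.2 = b'.1 := by omega
    have hlen : s₁.length + s₂.length < (a' :: s₁).length + (b' :: s₂).length := by
      simp only [length_cons]; omega
    rcases eq_or_ne (a'.1, b'.2) (a.1, b.2) with heq | hne
    · exact heq ▸ ih _ hlen h₁' h₂' hab' rfl
    · refine advance h₁' h₂' hab' hlen ?_
      simp only [ne_eq, Prod.mk.injEq] at hne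
      simp only [traversalStep_iff]
      omega

theorem IsTraversal.exists_forall_mem_compRel {m₁ m₂ m₃ : ℕ} {T₁ T₂ : List (ℕ × ℕ)}
    (h₁ : IsTraversal m₁ m₂ T₁) (h₂ : IsTraversal m₂ m₃ T₂) :
    ∃ T, IsTraversal m₁ m₃ T ∧ ∀ p ∈ T, p ∈ compRel T₁ T₂ := by
  obtain ⟨-, hh₁, hl₁, hb₁, hc₁⟩ := isTraversal_iff.1 h₁
  obtain ⟨-, hh₂, hl₂, hb₂, hc₂⟩ := isTraversal_iff.1 h₂
  obtain ⟨s₁, rfl⟩ := head?_eq_some_iff.1 hh₁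
  obtain ⟨s₂, rfl⟩ := head?_eq_some_iff.1 hh₂
  obtain ⟨l, hchain, hlast⟩ := exists_isChain_cons_of_relationReflTransGen
    (reflTransGen_compRel hc₁ hc₂ hl₁ hl₂ rfl (suffix_refl _) (suffix_refl _) rfl)
  have hmem : ∀ p ∈ (0, 0) :: l, p ∈ compRel ((0, 0) :: s₁) ((0, 0) :: s₂) :=
    hchain.induction _ _ (fun _ _ h _ => h.2)
      (fun _ => mk_mem_compRel mem_cons_self mem_cons_self rfl)
  refine ⟨(0, 0) :: l,
    isTraversal_iff.2 ⟨cons_ne_nil _ _, rfl, ?_, ?_, hchain.imp fun _ _ h => h.1⟩, hmem⟩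
  · rw [getLast?_eq_some_getLast (cons_ne_nil _ _), hlast]
  · rintro ⟨i, j⟩ hp
    obtain ⟨l, hil, hlj⟩ := mem_comp.1 (hmem _ hp)
    exact ⟨(hb₁ _ hil).1, (hb₂ _ hlj).2⟩

theorem le_mul_sInf_add_sInf {s t : Set ℝ} {a c : ℝ} (hs : s.Nonempty) (ht : t.Nonempty)
    (hc : 0 < c) (h : ∀ x ∈ s, ∀ y ∈ t, a ≤ c * (x + y)) : a ≤ c * (sInf s + sInf t) := by
  rw [← div_le_iff₀' hc, ← sub_le_iff_le_add]
  refine le_csInf hs fun x hx => ?_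
  rw [sub_le_comm]
  refine le_csInf ht fun y hy => ?_
  rw [sub_le_iff_le_add', div_le_iff₀' hc]
  exact h x hx y hy

section kDTW

variable {E : Type*} [PseudoMetricSpace E]

theorem matchedDists_nonneg {σ τ : ℕ → E} {T : List (ℕ × ℕ)} :
    ∀ x ∈ matchedDists σ τ T, 0 ≤ x := by
  simp only [matchedDists, forall_mem_map]
  exact fun _ _ => dist_nonneg

theorem topkSum_matchedDists_le_of_forall_mem_compRel {k : ℕ} (hk : k ≠ 0) {σ τ υ : ℕ → E}
    {T T₁ T₂ : List (ℕ × ℕ)} (hT : ∀ p ∈ T, p ∈ compRel T₁ T₂) :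
    topkSum k (matchedDists σ τ T) ≤
      k * (topkSum k (matchedDists σ υ T₁) + topkSum k (matchedDists υ τ T₂)) := by
  refine topkSum_le_mul (add_nonneg (topkSum_nonneg matchedDists_nonneg)
    (topkSum_nonneg matchedDists_nonneg)) ?_
  simp only [matchedDists, forall_mem_map]
  rintro ⟨i, j⟩ hp
  obtain ⟨l, hil, hlj⟩ := mem_comp.1 (hT _ hp)
  calc dist (σ i) (τ j) ≤ dist (σ i) (υ l) + dist (υ l) (τ j) := dist_triangle _ _ _
    _ ≤ _ := add_le_add (le_topkSum hk matchedDists_nonneg (mem_map_of_mem hil))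
        (le_topkSum hk matchedDists_nonneg (mem_map_of_mem hlj))

theorem kDTW_nonneg (k : ℕ) (σ τ : ℕ → E) (m m' : ℕ) : 0 ≤ kDTW k σ τ m m' :=
  Real.sInf_nonneg fun _ ⟨_, _, hx⟩ => hx ▸ topkSum_nonneg matchedDists_nonneg

theorem kDTW_zero (σ τ : ℕ → E) (m m' : ℕ) : kDTW 0 σ τ m m' = 0 :=
  le_antisymm (Real.sInf_nonpos fun _ ⟨_, _, hx⟩ => by simp [hx, topkSum])
    (kDTW_nonneg 0 σ τ m m')

theorem kDTW_le_topkSum {k : ℕ} {σ τ : ℕ → E} {m m' : ℕ} {T : List (ℕ × ℕ)}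
    (hT : IsTraversal m m' T) : kDTW k σ τ m m' ≤ topkSum k (matchedDists σ τ T) :=
  csInf_le ⟨0, fun _ ⟨_, _, hx⟩ => hx ▸ topkSum_nonneg matchedDists_nonneg⟩ ⟨T, hT, rfl⟩

theorem kDTW_set_nonempty (k : ℕ) (σ τ : ℕ → E) {m m' : ℕ} (hm : 1 ≤ m) (hm' : 1 ≤ m') :
    {x | ∃ T, IsTraversal m m' T ∧ x = topkSum k (matchedDists σ τ T)}.Nonempty :=
  let ⟨T, hT⟩ := exists_isTraversal hm hm'
  ⟨_, T, hT, rfl⟩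

end kDTW

/-- relaxed triangle inequality for `k`-DTW. -/
theorem kDTW_relaxed_triangle_ineq {d : ℕ} (k m₁ m₂ m₃ : ℕ)
    (hm₁ : 1 ≤ m₁) (hm₂ : 1 ≤ m₂) (hm₃ : 1 ≤ m₃)
    (σ τ υ : ℕ → EuclideanSpace ℝ (Fin d)) :
    kDTW k σ τ m₁ m₃ ≤ (k : ℝ) * (kDTW k σ υ m₁ m₂ + kDTW k υ τ m₂ m₃) := by
  rcases eq_or_ne k 0 with rfl | hk
  · simp [kDTW_zero]
  refine le_mul_sInf_add_sInf (kDTW_set_nonempty k σ υ hm₁ hm₂) (kDTW_set_nonempty k υ τ hm₂ hm₃)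
    (by positivity) ?_
  rintro _ ⟨T₁, hT₁, rfl⟩ _ ⟨T₂, hT₂, rfl⟩
  obtain ⟨T, hT, hcomp⟩ := hT₁.exists_forall_mem_compRel hT₂
  exact (kDTW_le_topkSum hT).trans (topkSum_matchedDists_le_of_forall_mem_compRel hk hcomp)
end

section
/- For any traversal T of two curves σ and τ, any parameter k, and any threshold value e ≥ 0, the quantity k·e + ∑_{(i,j)∈T} max{‖v_i − w_j‖ − e, 0} is at least the sum of the k largest matched distances in T. -/
open List

/-!
Each of the `k` largest entries `x` is at most `e + max (x - e) 0`, so their sum is at most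
`k * e` plus the sum of `max (x - e) 0` over those entries; the remaining entries contribute
nonnegative terms `max (x - e) 0`, so summing over the whole list only increases the bound.
-/

lemma List.sum_le_length_mul_add_sum_max_sub (e : ℝ) (l : List ℝ) :
    l.sum ≤ l.length * e + (l.map fun x => max (x - e) 0).sum := by
  induction l with
  | nil => simp
  | cons x l ih =>
    simp only [sum_cons, length_cons, map_cons, Nat.cast_succ]
    linarith [le_max_left (x - e) 0]

lemma List.sum_map_max_sub_mono {l₁ l₂ : List ℝ} (h : l₁.Sublist l₂) (e : ℝ) :
    (l₁.map fun x => max (x - e) 0).sum ≤ (l₂.map fun x => max (x - e) 0).sum :=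
  (h.map _).sum_le_sum fun _ hy => by
    obtain ⟨x, -, rfl⟩ := mem_map.mp hy
    exact le_max_right _ _

theorem topkSum_le_mul_add_sum_max_sub (k : ℕ) {e : ℝ} (he : 0 ≤ e) (l : List ℝ) :
    topkSum k l ≤ k * e + (l.map fun x => max (x - e) 0).sum := by
  set s := l.insertionSort (· ≥ ·)
  have hlen : ((s.take k).length : ℝ) * e ≤ k * e :=
    mul_le_mul_of_nonneg_right (by exact_mod_cast length_take_le k s) he
  have hperm : (s.map fun x => max (x - e) 0).sum = (l.map fun x => max (x - e) 0).sum :=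
    ((perm_insertionSort _ l).map _).sum_eq
  calc topkSum k l = (s.take k).sum := rfl
    _ ≤ (s.take k).length * e + ((s.take k).map fun x => max (x - e) 0).sum :=
      sum_le_length_mul_add_sum_max_sub e _
    _ ≤ k * e + (l.map fun x => max (x - e) 0).sum := by
      linarith [sum_map_max_sub_mono (take_sublist k s) e]

theorem topk_le_threshold_cost_general {d : ℕ} (k : ℕ)
    (σ τ : ℕ → EuclideanSpace ℝ (Fin d))
    (T : List (ℕ × ℕ))
    (e : ℝ) (he : 0 ≤ e) :
    topkSum k (matchedDists σ τ T) ≤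
      (k : ℝ) * e + (T.map fun p => max (dist (σ p.1) (τ p.2) - e) 0).sum := by
  simpa only [matchedDists, map_map, Function.comp_def] using
    topkSum_le_mul_add_sum_max_sub k he (matchedDists σ τ T)

/-- for any traversal `T`, parameter `k` and threshold `e ≥ 0`, the quantity
`k·e + ∑_{(i,j)∈T} max{‖v_i − w_j‖ − e, 0}` is at least the sum of the `k` largest
matched distances in `T`. -/
theorem topk_le_threshold_cost {d : ℕ} (k m' m'' : ℕ)
    (σ τ : ℕ → EuclideanSpace ℝ (Fin d))
    (T : List (ℕ × ℕ)) (hT : IsTraversal m' m'' T)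
    (e : ℝ) (he : 0 ≤ e) :
    topkSum k (matchedDists σ τ T) ≤
      (k : ℝ) * e + (T.map fun p => max (dist (σ p.1) (τ p.2) - e) 0).sum :=
  topk_le_threshold_cost_general k σ τ T e he
end

section
/- The breakdown point of the curve-of-top-k-median with respect to k-DTW is at least ⌊(k+1)/2⌋: for any curve π = (p_1,...,p_m) in ℝ^d with max_i ‖p_i − t_m(π)_1‖ = M and any corruption π_ℓ of at most ℓ = ⌊(k−1)/2⌋ vertices, the top-k-median of π_ℓ satisfies ‖t_m(π)_1 − t_m(π_ℓ)_1‖ ≤ 2M·⌊(k+1)/2⌋ < ∞. -/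
open List

/-- The top-`k` median cost of a point `s` for the curve `π` of complexity `m`. -/
noncomputable def topkMedCost {E : Type*} [PseudoMetricSpace E] (m k : ℕ)
    (π : ℕ → E) (s : E) : ℝ :=
  topkSum k ((List.range m).map fun i => dist (π i) s)

/-- `π'` is a corruption of the curve `π` (of complexity `m`) in at most `ℓ` vertices. -/
def IsCorruption {E : Type*} (m ℓ : ℕ) (π π' : ℕ → E) : Prop :=
  ∃ S : Finset ℕ, S.card ≤ ℓ ∧ ∀ i < m, i ∉ S → π' i = π i

/-
Let `t = Tm π`, `t' = Tm π'`, `D = ‖t - t'‖`, let `C` be the `a ≤ ⌊(k-1)/2⌋` corrupted vertices,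
and assume `D ≥ M` (otherwise there is nothing to prove). Complete `C` by `k - a` uncorrupted
vertices to a set `F` of `k` indices. Each corrupted vertex is at distance at least
`max (‖π'ᵢ - t‖) M - D` from `t'`, each uncorrupted one at least `D - M`, so the top-`k` cost of
`t'` for `π'` is at least `∑_C max (‖π'ᵢ - t‖) M - a D + (k - a)(D - M)`. On the other hand the
`k` vertices realising the top-`k` cost of `t` for `π'` cost at most
`∑_C max (‖π'ᵢ - t‖) M + (k - a) M`, since uncorrupted vertices are within `M` of `t`.
Minimality of `t'` gives `(k - 2a) D ≤ 2 (k - a) M`, and `(k - a) ≤ ⌊(k+1)/2⌋ (k - 2a)`.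
-/

theorem List.sum_le_sum_take_of_sublist {σ u : List ℝ} (hσ : σ.Pairwise (· ≥ ·))
    (hσ0 : ∀ x ∈ σ, 0 ≤ x) (hu : u <+ σ) {k : ℕ} (hk : u.length ≤ k) :
    u.sum ≤ (σ.take k).sum := by
  induction σ generalizing u k with
  | nil => simp [List.sublist_nil.mp hu]
  | cons x σ ih =>
    have hσ' := hσ.of_cons
    have hσ0' : ∀ y ∈ σ, 0 ≤ y := fun y hy => hσ0 y (List.mem_cons_of_mem x hy)
    cases k with
    | zero => simp [List.length_eq_zero_iff.mp (Nat.le_zero.mp hk)]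
    | succ j =>
      rw [List.take_succ_cons, List.sum_cons]
      cases hu with
      | cons_cons _ hu' =>
        rw [List.sum_cons]
        linarith [ih hσ' hσ0' hu' (by simpa using hk)]
      | cons _ hu' =>
        cases u with
        | nil =>
          have : 0 ≤ (σ.take j).sum :=
            List.sum_nonneg fun y hy => hσ0' y (List.mem_of_mem_take hy)
          rw [List.sum_nil]
          linarith [hσ0 x List.mem_cons_self]
        | cons y u =>
          have hyx : x ≥ y := List.rel_of_pairwise_cons hσ (hu'.subset List.mem_cons_self)
          rw [List.sum_cons]
          linarith [ih hσ' hσ0' (List.sublist_of_cons_sublist hu') (by simpa using hk)]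

theorem sum_le_topkSum_of_subperm {s l : List ℝ} (h : s <+~ l) (hl : ∀ x ∈ l, 0 ≤ x)
    {k : ℕ} (hk : s.length ≤ k) : s.sum ≤ topkSum k l := by
  have hperm : l ~ l.insertionSort (· ≥ ·) := (List.perm_insertionSort _ l).symm
  obtain ⟨u, hus, hul⟩ := h.trans hperm.subperm
  rw [← hus.sum_eq]
  exact List.sum_le_sum_take_of_sublist (List.pairwise_insertionSort _ l)
    (fun x hx => hl x (hperm.symm.subset hx)) hul (hus.length_eq ▸ hk)

theorem Finset.sum_le_topkSum {ι : Type*} {l : List ι} {F : Finset ι} {f : ι → ℝ} {k : ℕ}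
    (hF : ∀ i ∈ F, i ∈ l) (hk : F.card ≤ k) (hf : ∀ i ∈ l, 0 ≤ f i) :
    ∑ i ∈ F, f i ≤ topkSum k (l.map f) := by
  obtain ⟨u, hu, hul⟩ := List.subperm_of_subset F.nodup_toList fun i hi => hF i (by simpa using hi)
  rw [← F.sum_map_toList]
  refine sum_le_topkSum_of_subperm ⟨u.map f, hu.map f, hul.map f⟩ ?_ (by simpa using hk)
  simpa using hf

theorem exists_finset_topkSum_eq_sum {ι : Type*} [DecidableEq ι] {l : List ι} (hl : l.Nodup)
    (f : ι → ℝ) (k : ℕ) :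
    ∃ T : Finset ι, (∀ i ∈ T, i ∈ l) ∧ T.card ≤ k ∧ topkSum k (l.map f) = ∑ i ∈ T, f i := by
  set σ := (l.map f).insertionSort (· ≥ ·)
  obtain ⟨u, hu, hul⟩ : σ.take k <+~ l.map f :=
    (List.take_sublist k σ).subperm.trans (List.perm_insertionSort _ _).subperm
  obtain ⟨l', hl', rfl⟩ := List.sublist_map_iff.mp hul
  have hl'nd : l'.Nodup := hl.sublist hl'
  refine ⟨l'.toFinset, fun i hi => hl'.subset (List.mem_toFinset.mp hi), ?_, ?_⟩
  · rw [List.toFinset_card_of_nodup hl'nd, ← List.length_map (f := f), hu.length_eq]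
    exact List.length_take_le k σ
  · rw [List.sum_toFinset f hl'nd, hu.sum_eq]
    rfl

theorem Finset.sum_le_sum_max_add_mul {ι : Type*} [DecidableEq ι] {f : ι → ℝ} {T C : Finset ι}
    {k : ℕ} {M : ℝ} (hM : 0 ≤ M) (hT : T.card ≤ k) (hf : ∀ i ∈ T, i ∉ C → f i ≤ M) :
    ∑ i ∈ T, f i ≤ ∑ i ∈ C, max (f i) M + ((k : ℝ) - C.card) * M := by
  rw [← T.sum_inter_add_sum_sdiff C, ← C.sum_inter_add_sum_sdiff T, Finset.inter_comm C T]
  have hinter : ∑ i ∈ T ∩ C, f i ≤ ∑ i ∈ T ∩ C, max (f i) M :=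
    Finset.sum_le_sum fun i _ => le_max_left _ _
  have hout : ∑ i ∈ T \ C, f i ≤ (T \ C).card * M := by
    simpa using Finset.sum_le_card_nsmul _ _ _ fun i hi =>
      hf i (Finset.mem_sdiff.mp hi).1 (Finset.mem_sdiff.mp hi).2
  have hpad : (C \ T).card * M ≤ ∑ i ∈ C \ T, max (f i) M := by
    simpa using Finset.card_nsmul_le_sum _ _ _ fun _ _ => le_max_right _ M
  have hcard : ((T \ C).card : ℝ) ≤ (C \ T).card + k - C.card := by
    have hT' := T.card_inter_add_card_sdiff C
    have hC' := C.card_inter_add_card_sdiff T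
    rw [Finset.inter_comm] at hC'
    have : (T \ C).card + C.card ≤ (C \ T).card + k := by omega
    exact le_sub_iff_add_le.mpr (by exact_mod_cast this)
  nlinarith [mul_le_mul_of_nonneg_right hcard hM]

section TopkMedCost

variable {E : Type*} [PseudoMetricSpace E] {m k : ℕ}

theorem sum_dist_le_topkMedCost (π : ℕ → E) (s : E) {F : Finset ℕ} (hF : F ⊆ Finset.range m)
    (hk : F.card ≤ k) : ∑ i ∈ F, dist (π i) s ≤ topkMedCost m k π s :=
  Finset.sum_le_topkSum (fun _ hi => List.mem_range.mpr (Finset.mem_range.mp (hF hi))) hk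
    fun _ _ => dist_nonneg

theorem exists_finset_topkMedCost_eq_sum (π : ℕ → E) (s : E) :
    ∃ T ⊆ Finset.range m, T.card ≤ k ∧ topkMedCost m k π s = ∑ i ∈ T, dist (π i) s := by
  obtain ⟨T, hT, hTk, hsum⟩ := exists_finset_topkSum_eq_sum (List.nodup_range (n := m))
    (fun i => dist (π i) s) k
  exact ⟨T, fun i hi => Finset.mem_range.mpr (List.mem_range.mp (hT i hi)), hTk, hsum⟩

variable {π π' : ℕ → E} {t t' : E} {M : ℝ} {C : Finset ℕ}

theorem topkMedCost_corruption_le (hM0 : 0 ≤ M) (hagree : ∀ i < m, i ∉ C → π' i = π i)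
    (hM : ∀ i < m, dist (π i) t ≤ M) :
    topkMedCost m k π' t ≤ ∑ i ∈ C, max (dist (π' i) t) M + ((k : ℝ) - C.card) * M := by
  obtain ⟨T, hT, hTk, hcost⟩ := exists_finset_topkMedCost_eq_sum (m := m) (k := k) π' t
  rw [hcost]
  refine Finset.sum_le_sum_max_add_mul hM0 hTk fun i hi hiC => ?_
  have him : i < m := Finset.mem_range.mp (hT hi)
  rw [hagree i him hiC]
  exact hM i him

theorem le_topkMedCost_corruption {F : Finset ℕ} (hCF : C ⊆ F) (hF : F ⊆ Finset.range m)
    (hFk : F.card ≤ k) (hagree : ∀ i < m, i ∉ C → π' i = π i)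
    (hM : ∀ i < m, dist (π i) t ≤ M) (hMD : M ≤ dist t t') :
    ∑ i ∈ C, max (dist (π' i) t) M - C.card * dist t t'
      + ((F.card : ℝ) - C.card) * (dist t t' - M) ≤ topkMedCost m k π' t' := by
  refine le_trans ?_ (sum_dist_le_topkMedCost π' t' hF hFk)
  rw [← Finset.sum_sdiff hCF]
  have hcorrupt : ∑ i ∈ C, (max (dist (π' i) t) M - dist t t') ≤ ∑ i ∈ C, dist (π' i) t' :=
    Finset.sum_le_sum fun i _ => sub_le_iff_le_add.mpr <| max_le
      (dist_triangle_right _ _ _) (by linarith [dist_nonneg (x := π' i) (y := t')])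
  have hclean : ∑ _i ∈ F \ C, (dist t t' - M) ≤ ∑ i ∈ F \ C, dist (π' i) t' := by
    refine Finset.sum_le_sum fun i hi => ?_
    have him : i < m := Finset.mem_range.mp (hF (Finset.mem_sdiff.mp hi).1)
    rw [hagree i him (Finset.mem_sdiff.mp hi).2]
    linarith [dist_triangle_left t t' (π i), hM i him]
  simp only [Finset.sum_sub_distrib, Finset.sum_const, nsmul_eq_mul] at hcorrupt hclean
  rw [Finset.card_sdiff_of_subset hCF, Nat.cast_sub (Finset.card_le_card hCF)] at hclean
  linarith

end TopkMedCost

theorem Nat.sub_le_half_succ_mul_sub_two_mul {k a : ℕ} (ha : 2 * a < k) :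
    k - a ≤ (k + 1) / 2 * (k - 2 * a) := by
  obtain ⟨r, rfl | rfl⟩ := Nat.even_or_odd' k
  · obtain ⟨c, rfl⟩ : ∃ c, r = a + 1 + c := ⟨r - a - 1, by omega⟩
    rw [show (2 * (a + 1 + c) + 1) / 2 = a + 1 + c by omega,
      show 2 * (a + 1 + c) - 2 * a = 2 * (c + 1) by omega,
      show 2 * (a + 1 + c) - a = a + 2 * (c + 1) by omega]
    nlinarith
  · obtain ⟨c, rfl⟩ : ∃ c, r = a + c := ⟨r - a, by omega⟩
    rw [show (2 * (a + c) + 1 + 1) / 2 = a + c + 1 by omega,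
      show 2 * (a + c) + 1 - 2 * a = 2 * c + 1 by omega,
      show 2 * (a + c) + 1 - a = a + (2 * c + 1) by omega]
    nlinarith

theorem le_two_mul_mul_of_sub_two_mul {k a : ℕ} (h2a : 2 * a < k) {D M : ℝ} (hM : 0 ≤ M)
    (h : ((k : ℝ) - 2 * a) * D ≤ 2 * ((k : ℝ) - a) * M) :
    D ≤ 2 * M * (((k + 1) / 2 : ℕ) : ℝ) := by
  have hpos : (0 : ℝ) < (k : ℝ) - 2 * a := by
    rw [sub_pos]; exact_mod_cast h2a
  have hq : (k : ℝ) - a ≤ (((k + 1) / 2 : ℕ) : ℝ) * ((k : ℝ) - 2 * a) := by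
    have := Nat.cast_le (α := ℝ) |>.mpr (Nat.sub_le_half_succ_mul_sub_two_mul h2a)
    push_cast [Nat.cast_sub (by omega : a ≤ k), Nat.cast_sub h2a.le] at this
    exact this
  refine le_of_mul_le_mul_left ?_ hpos
  nlinarith [mul_le_mul_of_nonneg_left hq (by positivity : (0 : ℝ) ≤ 2 * M)]

theorem topkMedian_breakdown_lower_general (d : ℕ) (m k : ℕ)
    (hk : 1 ≤ k) (hkm : k ≤ m)
    (Tm : (ℕ → EuclideanSpace ℝ (Fin d)) → EuclideanSpace ℝ (Fin d))
    (hmin : ∀ π s, topkMedCost m k π (Tm π) ≤ topkMedCost m k π s)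
    (π π' : ℕ → EuclideanSpace ℝ (Fin d)) (M : ℝ)
    (hM : ∀ i < m, dist (π i) (Tm π) ≤ M)
    (hcor : IsCorruption m ((k - 1) / 2) π π') :
    dist (Tm π) (Tm π') ≤ 2 * M * (((k + 1) / 2 : ℕ) : ℝ) := by
  obtain ⟨S, hS, hagree⟩ := hcor
  have hM0 : 0 ≤ M := dist_nonneg.trans (hM 0 (by omega))
  rcases le_total (dist (Tm π) (Tm π')) M with hDM | hMD
  · have : (1 : ℝ) ≤ (((k + 1) / 2 : ℕ) : ℝ) := by exact_mod_cast (by omega : 1 ≤ (k + 1) / 2)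
    nlinarith
  have hC : 2 * (S ∩ Finset.range m).card < k := by
    have := (Finset.card_le_card (Finset.inter_subset_left (s₂ := Finset.range m))).trans hS
    omega
  set C := S ∩ Finset.range m
  have hagreeC : ∀ i < m, i ∉ C → π' i = π i := fun i hi hiC =>
    hagree i hi fun hiS => hiC (Finset.mem_inter.mpr ⟨hiS, Finset.mem_range.mpr hi⟩)
  obtain ⟨F, hCF, hF, hFk⟩ := Finset.exists_subsuperset_card_eq Finset.inter_subset_right
    (by omega : C.card ≤ k) (by simpa using hkm)
  have hlow := le_topkMedCost_corruption hCF hF hFk.le hagreeC hM hMD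
  have hup := topkMedCost_corruption_le (k := k) hM0 hagreeC hM
  rw [hFk] at hlow
  refine le_two_mul_mul_of_sub_two_mul hC hM0 ?_
  linarith [hmin π' (Tm π)]

/-- the breakdown point of the curve-of-top-`k`-median is at least
`⌊(k+1)/2⌋`: if all vertices of `π` are within distance `M` of its top-`k`-median, then
for any corruption of at most `⌊(k−1)/2⌋` vertices the top-`k`-median moves by at most
`2M·⌊(k+1)/2⌋`. -/
theorem topkMedian_breakdown_lower (d : ℕ) (m k : ℕ)
    (hk : 1 ≤ k) (hkm : k ≤ m)
    (Tm : (ℕ → EuclideanSpace ℝ (Fin d)) → EuclideanSpace ℝ (Fin d))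
    (hmin : ∀ π s, topkMedCost m k π (Tm π) ≤ topkMedCost m k π s)
    (heq : ∀ π v, Tm (fun i => π i + v) = Tm π + v)
    (π π' : ℕ → EuclideanSpace ℝ (Fin d)) (M : ℝ)
    (hM : ∀ i < m, dist (π i) (Tm π) ≤ M)
    (hcor : IsCorruption m ((k - 1) / 2) π π') :
    dist (Tm π) (Tm π') ≤ 2 * M * (((k + 1) / 2 : ℕ) : ℝ) :=
  topkMedian_breakdown_lower_general d m k hk hkm Tm hmin π π' M hM hcor
end

section
/- The generalized DTW distance with q ∈ [1,∞) satisfies a relaxed triangle inequality with factor m^{1/q}: if curves σ, τ, υ all have complexity m, then d_{DTW_q}(σ,τ) ≤ m^{1/q} · (d_{DTW_q}(σ,υ) + d_{DTW_q}(υ,τ)). -/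
open List

/-- The `DTW_q` distance: minimum over traversals of the `ℓ_q`-norm of matched distances. -/
noncomputable def DTWq {E : Type*} [PseudoMetricSpace E] (q : ℝ) (σ τ : ℕ → E)
    (m' m'' : ℕ) : ℝ :=
  sInf {x | ∃ T, IsTraversal m' m'' T ∧
    x = ((matchedDists σ τ T).map fun t => t ^ q).sum ^ (1 / q)}

/-!
Walking simultaneously along a traversal `T₁` of `(σ, υ)` and a traversal `T₂` of `(υ, τ)`
yields a traversal `T` of `(σ, τ)` in which every pair `(i, k)` factors as `(i, j) ∈ T₁`,
`(j, k) ∈ T₂`. By the triangle inequality and Minkowski's inequality the `ℓ_q` cost of `T` is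
at most the `ℓ_q` norm of the distances `‖σ_i - υ_j‖` plus that of the distances `‖υ_j - τ_k‖`
over `T`. Each pair of `T₁` occurs there at most `m` times (once for each `k`), and each pair
of `T₂` at most `m` times (once for each `i`), whence the factor `m ^ (1 / q)`.
-/

def IsTraversalStep (a b : ℕ × ℕ) : Prop :=
  b = (a.1 + 1, a.2) ∨ b = (a.1, a.2 + 1) ∨ b = (a.1 + 1, a.2 + 1)

theorem IsTraversalStep.lt {a b : ℕ × ℕ} (h : IsTraversalStep a b) : a < b := by
  rcases h with rfl | rfl | rfl <;> simp [Prod.lt_iff]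

theorem List.IsChain.nodup_of_isTraversalStep {T : List (ℕ × ℕ)}
    (h : T.IsChain IsTraversalStep) : T.Nodup :=
  (isChain_iff_pairwise.1 (h.imp fun _ _ => IsTraversalStep.lt)).nodup

def IsMonotonePath (s e : ℕ × ℕ) (T : List (ℕ × ℕ)) : Prop :=
  T.head? = some s ∧ T.getLast? = some e ∧ T.IsChain IsTraversalStep

theorem isMonotonePath_singleton {s e u : ℕ × ℕ} :
    IsMonotonePath s e [u] ↔ u = s ∧ u = e := by
  simp [IsMonotonePath]

theorem isMonotonePath_cons_cons {s e u v : ℕ × ℕ} {T : List (ℕ × ℕ)} :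
    IsMonotonePath s e (u :: v :: T) ↔
      u = s ∧ IsTraversalStep s v ∧ IsMonotonePath v e (v :: T) := by
  simp only [IsMonotonePath, head?_cons, getLast?_cons_cons, isChain_cons_cons, Option.some_inj]
  grind

theorem IsMonotonePath.le {s e : ℕ × ℕ} {T : List (ℕ × ℕ)} (h : IsMonotonePath s e T) :
    s ≤ e := by
  obtain ⟨hs, he, hT⟩ := h
  have hne : T ≠ [] := by rintro rfl; simp at hs
  rw [head?_eq_some_head hne, Option.some_inj] at hs
  rw [getLast?_eq_some_getLast hne, Option.some_inj] at he
  have hreach := relationReflTransGen_of_exists_isChain T hT hne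
  rw [hs, he] at hreach
  clear hs he
  induction hreach with
  | refl => exact le_rfl
  | tail _ hstep ih => exact ih.trans hstep.lt.le

theorem IsMonotonePath.cons {u s e : ℕ × ℕ} {T : List (ℕ × ℕ)} (hstep : IsTraversalStep u s)
    (h : IsMonotonePath s e T) : IsMonotonePath u e (u :: T) := by
  obtain ⟨T, rfl⟩ : ∃ T', T = s :: T' := by
    rcases T with _ | ⟨v, T⟩
    · simp [IsMonotonePath] at h
    · exact ⟨T, by simpa [IsMonotonePath] using h.1⟩
  exact isMonotonePath_cons_cons.2 ⟨rfl, hstep, h⟩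

theorem exists_comp_cons_of_reflGen_step {T₁ T₂ T₁' T₂' : List (ℕ × ℕ)} {i j k : ℕ} {s e : ℕ × ℕ}
    (hT₁ : T₁' ⊆ T₁) (hT₂ : T₂' ⊆ T₂) (hij : (i, j) ∈ T₁) (hjk : (j, k) ∈ T₂)
    (hs : Relation.ReflGen IsTraversalStep (i, k) s)
    (h : ∃ T, IsMonotonePath s e T ∧ ∀ p ∈ T, ∃ y, (p.1, y) ∈ T₁' ∧ (y, p.2) ∈ T₂') :
    ∃ T, IsMonotonePath (i, k) e T ∧ ∀ p ∈ T, ∃ y, (p.1, y) ∈ T₁ ∧ (y, p.2) ∈ T₂ := by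
  obtain ⟨T, hT, hmem⟩ := h
  have hmem' : ∀ p ∈ T, ∃ y, (p.1, y) ∈ T₁ ∧ (y, p.2) ∈ T₂ := fun p hp =>
    (hmem p hp).imp fun _ hy => ⟨hT₁ hy.1, hT₂ hy.2⟩
  rcases hs with _ | hstep
  · exact ⟨T, hT, hmem'⟩
  · refine ⟨(i, k) :: T, hT.cons hstep, ?_⟩
    rintro p (_ | ⟨_, hp⟩)
    exacts [⟨j, hij, hjk⟩, hmem' p hp]

theorem IsMonotonePath.exists_comp {T₁ T₂ : List (ℕ × ℕ)} {i j k a b c : ℕ}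
    (h₁ : IsMonotonePath (i, j) (a, b) T₁) (h₂ : IsMonotonePath (j, k) (b, c) T₂) :
    ∃ T, IsMonotonePath (i, k) (a, c) T ∧ ∀ p ∈ T, ∃ y, (p.1, y) ∈ T₁ ∧ (y, p.2) ∈ T₂ := by
  induction T₁ generalizing i j k T₂ with
  | nil => simp [IsMonotonePath] at h₁
  | cons s₁ T₁ ih₁ =>
  induction T₂ generalizing k with
  | nil => simp [IsMonotonePath] at h₂
  | cons s₂ T₂ ih₂ =>
  rcases T₁ with _ | ⟨t₁, T₁⟩ <;> rcases T₂ with _ | ⟨t₂, T₂⟩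
  · obtain ⟨rfl, he₁⟩ := isMonotonePath_singleton.1 h₁
    obtain ⟨rfl, he₂⟩ := isMonotonePath_singleton.1 h₂
    obtain ⟨rfl, rfl⟩ := Prod.mk.inj he₁
    obtain ⟨-, rfl⟩ := Prod.mk.inj he₂
    exact ⟨[(i, k)], isMonotonePath_singleton.2 ⟨rfl, rfl⟩, by simp⟩
  · -- `T₁` has ended at `j = b`, so `T₂` can only move by keeping `j`.
    obtain ⟨rfl, he₁⟩ := isMonotonePath_singleton.1 h₁
    obtain ⟨rfl, rfl⟩ := Prod.mk.inj he₁
    obtain ⟨rfl, hs₂, h₂'⟩ := isMonotonePath_cons_cons.1 h₂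
    rcases hs₂ with rfl | rfl | rfl
    · exact absurd h₂'.le (by simp)
    · exact exists_comp_cons_of_reflGen_step (Subset.refl _) (subset_cons_self _ _) mem_cons_self
        mem_cons_self (.single (.inr (.inl rfl))) (ih₂ h₂')
    · exact absurd h₂'.le (by simp)
  · obtain ⟨rfl, hs₁, h₁'⟩ := isMonotonePath_cons_cons.1 h₁
    obtain ⟨rfl, he₂⟩ := isMonotonePath_singleton.1 h₂
    obtain ⟨rfl, rfl⟩ := Prod.mk.inj he₂
    rcases hs₁ with rfl | rfl | rfl
    · exact exists_comp_cons_of_reflGen_step (subset_cons_self _ _) (Subset.refl _) mem_cons_self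
        mem_cons_self (.single (.inl rfl)) (ih₁ h₁' h₂)
    all_goals exact absurd h₁'.le (by simp)
  · obtain ⟨rfl, hs₁, h₁'⟩ := isMonotonePath_cons_cons.1 h₁
    obtain ⟨rfl, hs₂, h₂'⟩ := isMonotonePath_cons_cons.1 h₂
    rcases hs₁ with rfl | rfl | rfl
    · exact exists_comp_cons_of_reflGen_step (subset_cons_self _ _) (Subset.refl _) mem_cons_self
        mem_cons_self (.single (.inl rfl)) (ih₁ h₁' h₂)
    -- Otherwise `T₁` raises `j`; advance `T₂` alone if it keeps `j`, else both reach `j + 1`.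
    all_goals rcases hs₂ with rfl | rfl | rfl
    all_goals first
      | exact exists_comp_cons_of_reflGen_step (Subset.refl _) (subset_cons_self _ _) mem_cons_self
          mem_cons_self (.single (.inr (.inl rfl))) (ih₂ h₂')
      | exact exists_comp_cons_of_reflGen_step (subset_cons_self _ _) (subset_cons_self _ _)
          mem_cons_self mem_cons_self
          (by first | exact .refl | exact .single (by simp [IsTraversalStep])) (ih₁ h₁' h₂')

theorem isTraversal_iff_isMonotonePath {m' m'' : ℕ} {T : List (ℕ × ℕ)} :
    IsTraversal m' m'' T ↔
      IsMonotonePath (0, 0) (m' - 1, m'' - 1) T ∧ ∀ p ∈ T, p.1 < m' ∧ p.2 < m'' := by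
  refine ⟨fun ⟨_, hs, he, hb, hT⟩ => ⟨⟨hs, he, hT⟩, hb⟩, fun ⟨⟨hs, he, hT⟩, hb⟩ => ?_⟩
  exact ⟨by rintro rfl; simp at hs, hs, he, hb, hT⟩

theorem IsTraversal.nodup {m' m'' : ℕ} {T : List (ℕ × ℕ)} (h : IsTraversal m' m'' T) :
    T.Nodup :=
  (isTraversal_iff_isMonotonePath.1 h).1.2.2.nodup_of_isTraversalStep

theorem IsTraversal.exists_comp {m' n m'' : ℕ} {T₁ T₂ : List (ℕ × ℕ)}
    (h₁ : IsTraversal m' n T₁) (h₂ : IsTraversal n m'' T₂) :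
    ∃ T, IsTraversal m' m'' T ∧ ∀ p ∈ T, ∃ y, (p.1, y) ∈ T₁ ∧ (y, p.2) ∈ T₂ := by
  obtain ⟨hp₁, hb₁⟩ := isTraversal_iff_isMonotonePath.1 h₁
  obtain ⟨hp₂, hb₂⟩ := isTraversal_iff_isMonotonePath.1 h₂
  obtain ⟨T, hT, hmem⟩ := hp₁.exists_comp hp₂
  refine ⟨T, isTraversal_iff_isMonotonePath.2 ⟨hT, fun p hp => ?_⟩, hmem⟩
  obtain ⟨y, hy₁, hy₂⟩ := hmem p hp
  exact ⟨(hb₁ _ hy₁).1, (hb₂ _ hy₂).2⟩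

/-- The labels `κ` separate the points of each fibre of `φ` into fewer than `n` classes, so `φ`
is at most `n`-to-one. -/
theorem Finset.sum_comp_le_mul_sum {α β : Type*} {s : Finset α} {t : Finset β}
    {n : ℕ} (φ : α → β) (κ : α → ℕ) (hφ : ∀ a ∈ s, φ a ∈ t) (hκ : ∀ a ∈ s, κ a < n)
    (hinj : Set.InjOn (fun a => (φ a, κ a)) s) (g : β → ℝ) (hg : ∀ b ∈ t, 0 ≤ g b) :
    ∑ a ∈ s, g (φ a) ≤ n * ∑ b ∈ t, g b := by
  classical
  calc ∑ a ∈ s, g (φ a) = ∑ x ∈ s.image fun a => (φ a, κ a), g x.1 :=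
      (sum_image (f := fun x => g x.1) hinj).symm
    _ ≤ ∑ x ∈ t ×ˢ range n, g x.1 := by
      refine sum_le_sum_of_subset_of_nonneg ?_ fun x hx _ => hg x.1 (mem_product.1 hx).1
      intro x hx
      obtain ⟨a, ha, rfl⟩ := mem_image.1 hx
      exact mem_product.2 ⟨hφ a ha, mem_range.2 (hκ a ha)⟩
    _ = n * ∑ b ∈ t, g b := by simp [sum_product, mul_sum]

section Cost

variable {E : Type*} [PseudoMetricSpace E] {q : ℝ}

/-- `DTWq q σ τ m' m''` is, by definition, the infimum of `lqCost q σ τ T` over all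
traversals `T`. -/
noncomputable def lqCost (q : ℝ) (σ τ : ℕ → E) (T : List (ℕ × ℕ)) : ℝ :=
  ((matchedDists σ τ T).map fun t => t ^ q).sum ^ (1 / q)

theorem lqCost_nonneg (σ τ : ℕ → E) (T : List (ℕ × ℕ)) : 0 ≤ lqCost q σ τ T :=
  Real.rpow_nonneg (sum_nonneg fun _ hx => by
    obtain ⟨t, ht, rfl⟩ := mem_map.1 hx
    obtain ⟨p, -, rfl⟩ := mem_map.1 ht
    exact Real.rpow_nonneg dist_nonneg q) _

theorem lqCost_eq_of_nodup (σ τ : ℕ → E) {T : List (ℕ × ℕ)} (hT : T.Nodup) :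
    lqCost q σ τ T = (∑ p ∈ T.toFinset, dist (σ p.1) (τ p.2) ^ q) ^ (1 / q) := by
  rw [lqCost, matchedDists, map_map, sum_toFinset _ hT]
  rfl

theorem DTWq_nonneg (σ τ : ℕ → E) (m' m'' : ℕ) : 0 ≤ DTWq q σ τ m' m'' :=
  Real.sInf_nonneg <| by
    rintro _ ⟨T, -, rfl⟩
    exact lqCost_nonneg σ τ T

theorem DTWq_of_forall_not_isTraversal (σ τ : ℕ → E) {m' m'' : ℕ}
    (h : ∀ T, ¬IsTraversal m' m'' T) : DTWq q σ τ m' m'' = 0 := by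
  simp [DTWq, h]

theorem lqCost_le_of_forall_mem_comp (hq : 1 ≤ q) (σ υ τ : ℕ → E) {m' m'' : ℕ}
    {T T₁ T₂ : List (ℕ × ℕ)} (hT : T.Nodup) (hT₁ : T₁.Nodup) (hT₂ : T₂.Nodup)
    (hbound : ∀ p ∈ T, p.1 < m' ∧ p.2 < m'')
    (hcomp : ∀ p ∈ T, ∃ y, (p.1, y) ∈ T₁ ∧ (y, p.2) ∈ T₂) :
    lqCost q σ τ T ≤
      (m'' : ℝ) ^ (1 / q) * lqCost q σ υ T₁ + (m' : ℝ) ^ (1 / q) * lqCost q υ τ T₂ := by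
  choose! y hy using hcomp
  rw [lqCost_eq_of_nodup σ τ hT, lqCost_eq_of_nodup σ υ hT₁, lqCost_eq_of_nodup υ τ hT₂,
    ← Real.mul_rpow (by positivity) (by positivity),
    ← Real.mul_rpow (by positivity) (by positivity)]
  calc (∑ p ∈ T.toFinset, dist (σ p.1) (τ p.2) ^ q) ^ (1 / q)
      ≤ (∑ p ∈ T.toFinset, (dist (σ p.1) (υ (y p)) + dist (υ (y p)) (τ p.2)) ^ q) ^ (1 / q) := by
        gcongr with p
        exact dist_triangle _ _ _
    _ ≤ (∑ p ∈ T.toFinset, dist (σ p.1) (υ (y p)) ^ q) ^ (1 / q) +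
        (∑ p ∈ T.toFinset, dist (υ (y p)) (τ p.2) ^ q) ^ (1 / q) :=
      Real.Lp_add_le_of_nonneg _ hq (fun _ _ => dist_nonneg) (fun _ _ => dist_nonneg)
    _ ≤ (m'' * ∑ p ∈ T₁.toFinset, dist (σ p.1) (υ p.2) ^ q) ^ (1 / q) +
        (m' * ∑ p ∈ T₂.toFinset, dist (υ p.1) (τ p.2) ^ q) ^ (1 / q) := by
      gcongr
      · exact Finset.sum_comp_le_mul_sum (fun p => (p.1, y p)) Prod.snd
          (fun p hp => mem_toFinset.2 (hy p (mem_toFinset.1 hp)).1)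
          (fun p hp => (hbound p (mem_toFinset.1 hp)).2)
          (fun p _ p' _ h => by simp_all [Prod.ext_iff])
          (fun p => dist (σ p.1) (υ p.2) ^ q) fun _ _ => by positivity
      · exact Finset.sum_comp_le_mul_sum (fun p => (y p, p.2)) Prod.fst
          (fun p hp => mem_toFinset.2 (hy p (mem_toFinset.1 hp)).2)
          (fun p hp => (hbound p (mem_toFinset.1 hp)).1)
          (fun p _ p' _ h => by simp_all [Prod.ext_iff])
          (fun p => dist (υ p.1) (τ p.2) ^ q) fun _ _ => by positivity

end Cost

theorem le_mul_csInf_add_csInf {S₁ S₂ : Set ℝ} {a c : ℝ} (hc : 0 < c) (h₁ : S₁.Nonempty)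
    (h₂ : S₂.Nonempty) (h : ∀ x ∈ S₁, ∀ y ∈ S₂, a ≤ c * (x + y)) :
    a ≤ c * (sInf S₁ + sInf S₂) := by
  have hS₁ : ∀ y ∈ S₂, a / c - y ≤ sInf S₁ := fun y hy =>
    le_csInf h₁ fun x hx => by
      rw [sub_le_iff_le_add, div_le_iff₀' hc]
      linarith [h x hx y hy]
  have hS₂ : a / c - sInf S₁ ≤ sInf S₂ := le_csInf h₂ fun y hy => by linarith [hS₁ y hy]
  rw [← div_le_iff₀' hc]
  linarith

theorem DTWq_relaxed_triangle_general {d : ℕ} (q : ℝ) (hq : 1 ≤ q) (m : ℕ)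
    (σ τ υ : ℕ → EuclideanSpace ℝ (Fin d)) :
    DTWq q σ τ m m ≤ (m : ℝ) ^ (1 / q) * (DTWq q σ υ m m + DTWq q υ τ m m) := by
  by_cases hm : ∃ T, IsTraversal m m T
  · obtain ⟨T₀, hT₀⟩ := hm
    have hm₀ : 0 < m :=
      ((isTraversal_iff_isMonotonePath.1 hT₀).2 (0, 0) (mem_of_mem_head? hT₀.2.1)).1
    refine le_mul_csInf_add_csInf (by positivity) ⟨_, T₀, hT₀, rfl⟩ ⟨_, T₀, hT₀, rfl⟩ ?_
    rintro _ ⟨T₁, hT₁, rfl⟩ _ ⟨T₂, hT₂, rfl⟩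
    obtain ⟨T, hT, hcomp⟩ := hT₁.exists_comp hT₂
    calc DTWq q σ τ m m ≤ lqCost q σ τ T :=
          csInf_le ⟨0, by rintro _ ⟨T', -, rfl⟩; exact lqCost_nonneg σ τ T'⟩ ⟨T, hT, rfl⟩
      _ ≤ _ := lqCost_le_of_forall_mem_comp hq σ υ τ hT.nodup hT₁.nodup hT₂.nodup
          (isTraversal_iff_isMonotonePath.1 hT).2 hcomp
      _ = _ := (mul_add _ _ _).symm
  · -- Only for `m = 0`: then every `DTWq` is the junk value `sInf ∅ = 0`.
    rw [DTWq_of_forall_not_isTraversal σ τ (not_exists.1 hm)]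
    exact mul_nonneg (by positivity) (add_nonneg (DTWq_nonneg σ υ m m) (DTWq_nonneg υ τ m m))

/-- `DTW_q` satisfies a relaxed triangle inequality with factor `m^{1/q}`
for curves of common complexity `m`. -/
theorem DTWq_relaxed_triangle {d : ℕ} (q : ℝ) (hq : 1 ≤ q) (m : ℕ) (hm : 1 ≤ m)
    (σ τ υ : ℕ → EuclideanSpace ℝ (Fin d)) :
    DTWq q σ τ m m ≤ (m : ℝ) ^ (1 / q) * (DTWq q σ υ m m + DTWq q υ τ m m) :=
  DTWq_relaxed_triangle_general q hq m σ τ υ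
end

section
/- Let C be an ε'-net of the unit Euclidean ball B_2^d of size at most (1 + 2/ε')^d, and for each curve ψ of complexity m with vertices in B_2^d let ψ' be the curve obtained by replacing each vertex by a nearest net point in C. Then for every curve σ of complexity at most m, |d_DTW(σ,ψ) − d_DTW(σ,ψ')| ≤ 2mε'. In particular, choosing ε' = ε/(2m), the set of cost vectors induced by curves with vertices in C forms an ℓ_∞ ε-net of the DTW cost vectors of size at most exp(c·d·m·log(m/ε)) for an absolute constant c. -/
/-!
Moving each vertex of a curve `ψ` by at most `ε'` changes the cost of every fixed traversal by
at most `ε'` per matched pair, hence by at most `2mε'`; since DTW is the infimum of these costs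
over the same set of traversals, it moves by at most `2mε'` too. Rounding the vertices of `ψ`
to the net `C` therefore lands on one of at most `|C|^m` curves whose cost vector is `ε`-close
when `ε' = ε/(2m)`, and `|C|^m ≤ (1 + 4m/ε)^(dm) ≤ (m/ε)^(4dm)` because `m/ε ≥ 2`.
-/

open List

theorem csInf_image_le_csInf_image_add {ι : Type*} {s : Set ι} (hs : s.Nonempty)
    {f g : ι → ℝ} (hf : BddBelow (f '' s)) {K : ℝ} (h : ∀ i ∈ s, f i ≤ g i + K) :
    sInf (f '' s) ≤ sInf (g '' s) + K := by
  suffices sInf (f '' s) - K ≤ sInf (g '' s) by linarith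
  refine le_csInf (hs.image g) ?_
  rintro _ ⟨i, hi, rfl⟩
  linarith [csInf_le hf (Set.mem_image_of_mem f hi), h i hi]

theorem abs_csInf_image_sub_csInf_image_le {ι : Type*} {s : Set ι} (hs : s.Nonempty)
    {f g : ι → ℝ} (hf : BddBelow (f '' s)) (hg : BddBelow (g '' s)) {K : ℝ}
    (h : ∀ i ∈ s, |f i - g i| ≤ K) : |sInf (f '' s) - sInf (g '' s)| ≤ K := by
  refine abs_sub_le_iff.mpr ⟨sub_le_iff_le_add'.mpr ?_, sub_le_iff_le_add'.mpr ?_⟩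
  · exact csInf_image_le_csInf_image_add hs hf fun i hi =>
      sub_le_iff_le_add'.mp (abs_sub_le_iff.mp (h i hi)).1
  · exact csInf_image_le_csInf_image_add hs hg fun i hi =>
      sub_le_iff_le_add'.mp (abs_sub_le_iff.mp (h i hi)).2

namespace IsTraversal

variable {a b : ℕ} {T : List (ℕ × ℕ)}

theorem one_le (h : IsTraversal a b T) : 1 ≤ a ∧ 1 ≤ b := by
  obtain ⟨p, hp⟩ := List.exists_mem_of_ne_nil T h.1
  have := h.2.2.2.1 p hp
  omega

theorem concat (h : IsTraversal a b T) {a' b' : ℕ}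
    (hstep : (a' - 1, b' - 1) = (a - 1 + 1, b - 1) ∨ (a' - 1, b' - 1) = (a - 1, b - 1 + 1) ∨
      (a' - 1, b' - 1) = (a - 1 + 1, b - 1 + 1)) (ha' : 1 ≤ a') (hb' : 1 ≤ b') :
    IsTraversal a' b' (T ++ [(a' - 1, b' - 1)]) := by
  obtain ⟨hne, hhead, hlast, hmem, hchain⟩ := h
  obtain ⟨ha, hb⟩ := one_le ⟨hne, hhead, hlast, hmem, hchain⟩
  have hle : a ≤ a' ∧ b ≤ b' := by
    simp only [Prod.mk.injEq] at hstep
    omega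
  refine ⟨by simp, ?_, by simp, ?_, ?_⟩
  · rwa [List.head?_append_of_ne_nil _ hne]
  · intro p hp
    rcases List.mem_append.mp hp with hp | hp
    · have := hmem p hp
      omega
    · rw [List.mem_singleton.mp hp]
      omega
  · refine List.isChain_append.mpr ⟨hchain, List.isChain_singleton _, ?_⟩
    rw [hlast]
    simpa using hstep

theorem exists_of_one_le (ha : 1 ≤ a) (hb : 1 ≤ b) : ∃ T, IsTraversal a b T := by
  induction a, ha using Nat.le_induction with
  | base =>
    induction b, hb using Nat.le_induction with
    | base => exact ⟨[(0, 0)], by simp, rfl, rfl, by simp, List.isChain_singleton _⟩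
    | succ b hb ih =>
      obtain ⟨T, hT⟩ := ih
      exact ⟨_, hT.concat (by simp; omega) le_rfl (by omega)⟩
  | succ a ha ih =>
    obtain ⟨T, hT⟩ := ih
    exact ⟨_, hT.concat (by simp; omega) (by omega) hb⟩

/-- Every step increases `p.1 + p.2`, which stays below `a + b`. -/
theorem length_le (h : IsTraversal a b T) : T.length ≤ a + b := by
  obtain ⟨-, -, -, hmem, hchain⟩ := h
  have hsum : (T.map fun p => p.1 + p.2).Pairwise (· < ·) := by
    refine List.isChain_iff_pairwise.mp (List.isChain_map _ |>.mpr (hchain.imp ?_))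
    rintro p q (rfl | rfl | rfl) <;> simp only <;> omega
  have hsub : (T.map fun p => p.1 + p.2) ⊆ List.range (a + b) := by
    intro x hx
    obtain ⟨p, hp, rfl⟩ := List.mem_map.mp hx
    have := hmem p hp
    simp only [List.mem_range]
    omega
  simpa using (hsum.nodup.subperm hsub).length_le

end IsTraversal

section DTW

variable {E : Type*} [PseudoMetricSpace E]

theorem sum_matchedDists_nonneg (σ τ : ℕ → E) (T : List (ℕ × ℕ)) :
    0 ≤ (matchedDists σ τ T).sum :=
  List.sum_nonneg <| by
    simp only [matchedDists, List.mem_map]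
    rintro _ ⟨p, -, rfl⟩
    exact dist_nonneg

theorem abs_sum_matchedDists_sub_le {σ ψ ψ' : ℕ → E} {T : List (ℕ × ℕ)} {δ : ℝ}
    (hδ : ∀ p ∈ T, dist (ψ p.2) (ψ' p.2) ≤ δ) :
    |(matchedDists σ ψ T).sum - (matchedDists σ ψ' T).sum| ≤ T.length * δ := by
  induction T with
  | nil => simp [matchedDists]
  | cons p T ih =>
    have hp : |dist (σ p.1) (ψ p.2) - dist (σ p.1) (ψ' p.2)| ≤ δ :=
      (dist_dist_dist_le_right ..).trans (hδ p List.mem_cons_self)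
    have hT := ih fun q hq => hδ q (List.mem_cons_of_mem p hq)
    simp only [matchedDists, List.map_cons, List.sum_cons, List.length_cons, Nat.cast_succ]
      at hT ⊢
    calc _ = |(dist (σ p.1) (ψ p.2) - dist (σ p.1) (ψ' p.2)) +
          ((T.map fun q => dist (σ q.1) (ψ q.2)).sum -
            (T.map fun q => dist (σ q.1) (ψ' q.2)).sum)| := by ring_nf
      _ ≤ δ + T.length * δ := (abs_add_le _ _).trans (add_le_add hp hT)
      _ = _ := by ring

theorem DTW_eq_sInf_image (σ τ : ℕ → E) (a b : ℕ) :
    DTW σ τ a b = sInf ((fun T => (matchedDists σ τ T).sum) '' {T | IsTraversal a b T}) := by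
  simp only [DTW, Set.image, Set.mem_ofPred, eq_comm]

/-- Each traversal has at most `a + b` matched pairs, each of whose costs moves by at most `δ`. -/
theorem abs_DTW_sub_DTW_le {σ ψ ψ' : ℕ → E} {a b : ℕ} (ha : 1 ≤ a) (hb : 1 ≤ b) {δ : ℝ}
    (hδ : ∀ j < b, dist (ψ j) (ψ' j) ≤ δ) :
    |DTW σ ψ a b - DTW σ ψ' a b| ≤ (a + b) * δ := by
  have hδ0 : 0 ≤ δ := dist_nonneg.trans (hδ 0 hb)
  have hbdd : ∀ τ : ℕ → E, BddBelow ((fun T => (matchedDists σ τ T).sum) ''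
      {T | IsTraversal a b T}) := fun τ => ⟨0, by
    rintro _ ⟨T, -, rfl⟩
    exact sum_matchedDists_nonneg σ τ T⟩
  rw [DTW_eq_sInf_image, DTW_eq_sInf_image]
  refine abs_csInf_image_sub_csInf_image_le (IsTraversal.exists_of_one_le ha hb)
    (hbdd ψ) (hbdd ψ') fun T hT => ?_
  refine (abs_sum_matchedDists_sub_le fun p hp => hδ _ (hT.2.2.2.1 p hp).2).trans ?_
  gcongr
  exact_mod_cast IsTraversal.length_le hT

/-- `N` consists of the cost vectors of the curves with vertices in `C`; the one approximating
`ψ` is that of `ψ` with every vertex rounded to `C`. -/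
theorem exists_finset_DTW_costVector_approx [Inhabited E] {n m : ℕ} (P : Fin n → ℕ → E)
    (mP : Fin n → ℕ) (hmP : ∀ i, 1 ≤ mP i) (hm : 1 ≤ m) {A : Set E} {C : Finset E} {δ : ℝ}
    (hC : ∀ x ∈ A, ∃ y ∈ C, dist x y ≤ δ) :
    ∃ N : Finset (Fin n → ℝ), N.card ≤ C.card ^ m ∧
      ∀ ψ : ℕ → E, (∀ j < m, ψ j ∈ A) →
        ∃ v ∈ N, ∀ i, |v i - DTW (P i) ψ (mP i) m| ≤ (mP i + m) * δ := by
  classical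
  let curve (f : Fin m → C) : ℕ → E := fun j => if h : j < m then f ⟨j, h⟩ else default
  let cost (f : Fin m → C) : Fin n → ℝ := fun i => DTW (P i) (curve f) (mP i) m
  refine ⟨Finset.univ.image cost, Finset.card_image_le.trans (by simp), fun ψ hψ => ?_⟩
  choose round hround_mem hround using fun j : Fin m => hC (ψ j) (hψ j j.2)
  let f : Fin m → C := fun j => ⟨round j, hround_mem j⟩
  refine ⟨cost f, Finset.mem_image_of_mem cost (Finset.mem_univ f), fun i => ?_⟩
  rw [abs_sub_comm]
  refine abs_DTW_sub_DTW_le (hmP i) hm fun j hj => ?_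
  simp only [curve, f, dif_pos hj]
  exact hround ⟨j, hj⟩

end DTW

theorem pow_one_add_two_div_le_exp {m ε : ℝ} (hm : 1 ≤ m) (hε : 0 < ε) (hε2 : ε ≤ 1 / 2)
    (d k : ℕ) : ((1 + 2 / (ε / (2 * m))) ^ d) ^ k ≤ Real.exp (4 * d * k * Real.log (m / ε)) := by
  have hr : 2 ≤ m / ε := by rw [le_div_iff₀ hε]; linarith
  have hbase : 1 + 2 / (ε / (2 * m)) ≤ (m / ε) ^ 4 := by
    rw [show 2 / (ε / (2 * m)) = 4 * (m / ε) by field_simp; ring]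
    nlinarith [pow_le_pow_left₀ (by norm_num) hr 3]
  have hpos : 0 < (m / ε) ^ (4 * (d * k)) := by positivity
  calc _ ≤ (((m / ε) ^ 4) ^ d) ^ k := by gcongr
    _ = Real.exp (4 * d * k * Real.log (m / ε)) := by
      rw [← pow_mul, ← pow_mul, ← Real.exp_log hpos, Real.log_pow]
      push_cast
      ring_nf

/-- replacing the vertices of a median curve by nearest points of an
`ε'`-net `C` of the unit ball changes each DTW cost by at most `2mε'`; in particular,
with `ε' = ε/(2m)`, the cost vectors of curves with vertices in `C` form an `ℓ_∞` `ε`-net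
of the DTW cost vectors, of size at most `exp(c·d·m·log(m/ε))` for an absolute constant. -/
theorem dtw_net_bound :
    ∃ c : ℝ, 0 < c ∧
      ∀ (d m n : ℕ), 1 ≤ d → 1 ≤ m → 1 ≤ n →
      ∀ (P : Fin n → ℕ → EuclideanSpace ℝ (Fin d)) (mP : Fin n → ℕ),
        (∀ i, 1 ≤ mP i ∧ mP i ≤ m) →
        (∀ i j, j < mP i → ‖P i j‖ ≤ 1) →
        ((∀ ε' : ℝ, 0 < ε' →
          ∀ C : Finset (EuclideanSpace ℝ (Fin d)),
            (∀ x : EuclideanSpace ℝ (Fin d), ‖x‖ ≤ 1 → ∃ y ∈ C, dist x y ≤ ε') →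
            ((C.card : ℝ) ≤ (1 + 2 / ε') ^ d) →
            ∀ ψ ψ' : ℕ → EuclideanSpace ℝ (Fin d),
              (∀ j < m, ‖ψ j‖ ≤ 1) →
              (∀ j < m, ψ' j ∈ C ∧ dist (ψ j) (ψ' j) ≤ ε') →
              ∀ i, |DTW (P i) ψ (mP i) m - DTW (P i) ψ' (mP i) m| ≤ 2 * m * ε')
        ∧ (∀ ε : ℝ, 0 < ε → ε ≤ 1 / 2 →
          ∀ C : Finset (EuclideanSpace ℝ (Fin d)),
            (∀ x : EuclideanSpace ℝ (Fin d), ‖x‖ ≤ 1 → ∃ y ∈ C, dist x y ≤ ε / (2 * m)) →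
            ((C.card : ℝ) ≤ (1 + 2 / (ε / (2 * m))) ^ d) →
            ∃ N : Finset (Fin n → ℝ),
              (N.card : ℝ) ≤ Real.exp (c * d * m * Real.log (m / ε)) ∧
              ∀ ψ : ℕ → EuclideanSpace ℝ (Fin d), (∀ j < m, ‖ψ j‖ ≤ 1) →
                ∃ v ∈ N, ∀ i, |v i - DTW (P i) ψ (mP i) m| ≤ ε)) := by
  refine ⟨4, by norm_num, fun d m n _ hm _ P mP hmP _ => ⟨?_, ?_⟩⟩
  · intro ε' hε' C _ _ ψ ψ' _ hψ' i
    have : (mP i : ℝ) ≤ m := by exact_mod_cast (hmP i).2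
    calc _ ≤ (mP i + m) * ε' := abs_DTW_sub_DTW_le (hmP i).1 hm fun j hj => (hψ' j hj).2
      _ ≤ 2 * m * ε' := by gcongr; linarith
  · intro ε hε hε2 C hC hcard
    have hm' : (1 : ℝ) ≤ m := by exact_mod_cast hm
    obtain ⟨N, hNcard, hN⟩ := exists_finset_DTW_costVector_approx P mP (fun i => (hmP i).1) hm
      (A := Metric.closedBall 0 1) (δ := ε / (2 * m)) fun x hx => hC x (by simpa using hx)
    refine ⟨N, ?_, fun ψ hψ => ?_⟩
    · calc (N.card : ℝ) ≤ (C.card : ℝ) ^ m := by exact_mod_cast hNcard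
        _ ≤ ((1 + 2 / (ε / (2 * m))) ^ d) ^ m := by gcongr
        _ ≤ _ := pow_one_add_two_div_le_exp hm' hε hε2 d m
    · obtain ⟨v, hv, hvψ⟩ := hN ψ fun j hj => by simpa using hψ j hj
      refine ⟨v, hv, fun i => (hvψ i).trans ?_⟩
      have : (mP i : ℝ) ≤ m := by exact_mod_cast (hmP i).2
      calc (mP i + m) * (ε / (2 * m)) ≤ 2 * m * (ε / (2 * m)) := by gcongr; linarith
        _ = ε := by field_simp
end
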